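/- arXiv:2410.02154 — 2 statements merged into one kernel-verified Lean document; each statement's English description precedes it below -/
import Mathlib

section
/- The closed-form safe control u_*(x,v) = v + L_gh(x)^T · max{0, -ω(x,v,0)} / (L_gh(x)·L_gh(x)^T + γ^{-1} h(x)^2) satisfies the relaxed constraint ω(x, u_*(x,v), μ_*(x)) ≥ 0, where μ_*(x) = γ^{-1} h(x) · max{0,-ω(x,v,0)} / (L_gh(x)·L_gh(x)^T + γ^{-1} h(x)^2), provided L_gh(x) ≠ 0 or h(x) ≠ 0. Here ω(x,u,μ) = L_fh(x) + L_gh(x)·u + α(h(x)) + μ·h(x). -/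
open Real Finset

variable {n m : ℕ}

/-- Lie derivative of `h` along `f`. -/
noncomputable def Lf {n : ℕ} (h : (Fin n → ℝ) → ℝ) (f : (Fin n → ℝ) → (Fin n → ℝ))
    (x : Fin n → ℝ) : ℝ :=
  fderiv ℝ h x (f x)

/-- Row vector `L_g h(x)` of Lie derivatives of `h` along the columns of `g`. -/
noncomputable def Lg {n m : ℕ} (h : (Fin n → ℝ) → ℝ)
    (g : (Fin n → ℝ) → Matrix (Fin n) (Fin m) ℝ) (x : Fin n → ℝ) : Fin m → ℝ :=
  fun j => fderiv ℝ h x (fun i => g x i j)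

/-- The R-CBF safety constraint function `ω(x, u, μ)`. -/
noncomputable def omega {n m : ℕ} (h : (Fin n → ℝ) → ℝ)
    (f : (Fin n → ℝ) → (Fin n → ℝ)) (g : (Fin n → ℝ) → Matrix (Fin n) (Fin m) ℝ)
    (α : ℝ → ℝ) (x : Fin n → ℝ) (u : Fin m → ℝ) (μ : ℝ) : ℝ :=
  Lf h f x + (∑ j, Lg h g x j * u j) + α (h x) + μ * h x

/-- The closed-form safe control `u_*(x, v)`. -/
noncomputable def uStar {n m : ℕ} (h : (Fin n → ℝ) → ℝ)
    (f : (Fin n → ℝ) → (Fin n → ℝ)) (g : (Fin n → ℝ) → Matrix (Fin n) (Fin m) ℝ)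
    (α : ℝ → ℝ) (γ : ℝ) (x : Fin n → ℝ) (v : Fin m → ℝ) : Fin m → ℝ :=
  fun j => v j + Lg h g x j * max 0 (-(omega h f g α x v 0)) /
    ((∑ i, Lg h g x i * Lg h g x i) + γ⁻¹ * h x ^ 2)

/-- The optimal slack variable `μ_*(x)`. -/
noncomputable def muStar {n m : ℕ} (h : (Fin n → ℝ) → ℝ)
    (f : (Fin n → ℝ) → (Fin n → ℝ)) (g : (Fin n → ℝ) → Matrix (Fin n) (Fin m) ℝ)
    (α : ℝ → ℝ) (γ : ℝ) (x : Fin n → ℝ) (v : Fin m → ℝ) : ℝ :=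
  γ⁻¹ * h x * max 0 (-(omega h f g α x v 0)) /
    ((∑ i, Lg h g x i * Lg h g x i) + γ⁻¹ * h x ^ 2)

theorem safe_control_satisfies_relaxed_constraint
    (h : (Fin n → ℝ) → ℝ) (f : (Fin n → ℝ) → (Fin n → ℝ))
    (g : (Fin n → ℝ) → Matrix (Fin n) (Fin m) ℝ)
    (γ : ℝ) (hγ : 0 < γ) (α : ℝ → ℝ) (hα0 : α 0 = 0)
    (x : Fin n → ℝ) (v : Fin m → ℝ)
    (hnz : Lg h g x ≠ 0 ∨ h x ≠ 0) :
    0 ≤ omega h f g α x (uStar h f g α γ x v) (muStar h f g α γ x v) := by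
  set ω0 := omega h f g α x v 0 with hω0
  set M := max 0 (-ω0) with hM
  set S := ∑ i, Lg h g x i * Lg h g x i with hS
  set D := S + γ⁻¹ * h x ^ 2 with hD
  have hSnn : 0 ≤ S := Finset.sum_nonneg fun i _ => mul_self_nonneg _
  have hγinv : 0 < γ⁻¹ := inv_pos.mpr hγ
  have hDpos : 0 < D := by
    rcases hnz with hg | hh
    · obtain ⟨j, hj⟩ := Function.ne_iff.mp hg
      have hjpos : 0 < Lg h g x j * Lg h g x j := mul_self_pos.mpr hj
      have hSpos : 0 < S := by
        rw [hS]
        exact lt_of_lt_of_le hjpos (Finset.single_le_sum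
          (fun i _ => mul_self_nonneg (Lg h g x i)) (Finset.mem_univ j))
      rw [hD]
      nlinarith [mul_nonneg hγinv.le (sq_nonneg (h x))]
    · have : 0 < γ⁻¹ * h x ^ 2 := mul_pos hγinv (by positivity)
      rw [hD]; nlinarith
  have hDne : D ≠ 0 := ne_of_gt hDpos
  have key : omega h f g α x (uStar h f g α γ x v) (muStar h f g α γ x v)
      = ω0 + M := by
    have hsum : ∑ j, Lg h g x j * (v j + Lg h g x j * M / D)
        = (∑ j, Lg h g x j * v j) + S * M / D := by
      rw [hS, Finset.sum_mul, Finset.sum_div, ← Finset.sum_add_distrib]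
      exact Finset.sum_congr rfl fun j _ => by ring
    show Lf h f x + (∑ j, Lg h g x j * (v j + Lg h g x j * M / D)) + α (h x)
        + (γ⁻¹ * h x * M / D) * h x = ω0 + M
    rw [hsum, hω0]
    show _ = (Lf h f x + (∑ j, Lg h g x j * v j) + α (h x) + 0 * h x) + M
    have : S * M / D + (γ⁻¹ * h x * M / D) * h x = M := by
      have e : S * M / D + (γ⁻¹ * h x * M / D) * h x = (S + γ⁻¹ * h x ^ 2) * M / D := by
        ring
      rw [e, ← hD, mul_div_assoc]; exact mul_div_cancel₀ M hDne
    nlinarith [this]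
  rw [key]
  have h1 : 0 ≤ M := le_max_left _ _
  have h2 : -ω0 ≤ M := le_max_right _ _
  linarith
end

section
/- The pair (u_*, μ_*) given by u_* = v + a^T·max{0,-ω₀}/(a a^T + γ^{-1}c²) and μ_* = γ^{-1}c·max{0,-ω₀}/(a a^T + γ^{-1}c²) is the unique minimizer of (1/2)‖u−v‖² + (γ/2)μ² over all (u,μ) ∈ ℝ^m × ℝ satisfying b + a·u + μ·c ≥ 0, where ω₀ = b + a·v, whenever (a,c) ≠ (0,0). -/
open Real Finset

/-- Dot product of two vectors in `Fin m → ℝ`. -/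
noncomputable def dot {m : ℕ} (a u : Fin m → ℝ) : ℝ := ∑ j, a j * u j

/-- Minimum-intervention cost `(1/2)‖u − v‖² + (γ/2)μ²`. -/
noncomputable def miCost {m : ℕ} (γ : ℝ) (v u : Fin m → ℝ) (μ : ℝ) : ℝ :=
  (1 / 2) * (∑ j, (u j - v j) ^ 2) + (γ / 2) * μ ^ 2

theorem closed_form_unique_minimizer {m : ℕ} (a : Fin m → ℝ) (b c : ℝ)
    (hnz : ¬(a = 0 ∧ c = 0)) (v : Fin m → ℝ) (γ : ℝ) (hγ : 0 < γ) :
    let ω₀ := b + dot a v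
    let den := dot a a + γ⁻¹ * c ^ 2
    let uS : Fin m → ℝ := fun j => v j + a j * max 0 (-ω₀) / den
    let μS : ℝ := γ⁻¹ * c * max 0 (-ω₀) / den
    (0 ≤ b + dot a uS + μS * c) ∧
      ∀ (u : Fin m → ℝ) (μ : ℝ), 0 ≤ b + dot a u + μ * c →
        (u, μ) ≠ (uS, μS) → miCost γ v uS μS < miCost γ v u μ := by
  intro ω₀ den uS μS
  have hω : ω₀ = b + dot a v := rfl
  set M : ℝ := max 0 (-ω₀) with hMdef
  have hM0 : 0 ≤ M := le_max_left _ _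
  have hA0 : 0 ≤ dot a a := Finset.sum_nonneg fun j _ => mul_self_nonneg _
  have hc0 : 0 ≤ γ⁻¹ * c ^ 2 := mul_nonneg (inv_nonneg.mpr hγ.le) (sq_nonneg c)
  have hden : 0 < den := by
    rcases not_and_or.mp hnz with ha | hc
    · obtain ⟨j, hj⟩ := Function.ne_iff.mp ha
      have : 0 < dot a a := Finset.sum_pos'
        (fun i _ => mul_self_nonneg _) ⟨j, Finset.mem_univ j, mul_self_pos.mpr hj⟩
      exact add_pos_of_pos_of_nonneg this hc0
    · have : 0 < γ⁻¹ * c ^ 2 := by positivity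
      exact add_pos_of_nonneg_of_pos hA0 this
  have hdne : den ≠ 0 := hden.ne'
  set lam : ℝ := M / den with hlamdef
  have hlam0 : 0 ≤ lam := div_nonneg hM0 hden.le
  have hlamd : lam * den = M := div_mul_cancel₀ _ hdne
  have hMω : M * (ω₀ + M) = 0 := by
    rcases le_or_gt 0 ω₀ with h | h
    · have : M = 0 := max_eq_left (by linarith)
      rw [this]; ring
    · have : M = -ω₀ := max_eq_right (by linarith)
      rw [this]; ring
  have hlamω : lam * (ω₀ + M) = 0 := by
    rcases mul_eq_zero.mp hMω with h | h
    · rw [hlamdef, h]; simp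
    · rw [mul_eq_zero]; right; exact h
  have huSj : ∀ j, uS j = v j + a j * lam := by
    intro j
    simp only [uS, hlamdef, hMdef]
    ring
  have hdotS : dot a uS = dot a v + dot a a * lam := by
    simp only [dot]
    rw [Finset.sum_mul, ← Finset.sum_add_distrib]
    refine Finset.sum_congr rfl fun j _ => ?_
    rw [huSj j]; ring
  have hμS : μS = γ⁻¹ * c * lam := by
    simp only [μS, hlamdef, hMdef]; ring
  have hγμS : γ * μS = c * lam := by
    rw [hμS]; field_simp
  have hcμS : c * μS = (den - dot a a) * lam := by
    rw [hμS]; simp only [den]; ring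
  have hfeas0 : b + dot a uS + μS * c = ω₀ + lam * den := by
    rw [hdotS]
    linear_combination hcμS - hω
  have hfeas : 0 ≤ b + dot a uS + μS * c := by
    rw [hfeas0, hlamd]
    have h2 : -ω₀ ≤ M := by rw [hMdef]; exact le_max_right _ _
    linarith
  refine ⟨hfeas, ?_⟩
  intro u μ hs hne
  have key : ∀ w : Fin m → ℝ, (∑ j, (w j - v j) ^ 2) =
      (∑ j, (w j - uS j) ^ 2) + 2 * lam * (dot a w - dot a uS) + lam ^ 2 * dot a a := by
    intro w
    simp only [dot]
    rw [← Finset.sum_sub_distrib, Finset.mul_sum, Finset.mul_sum, ← Finset.sum_add_distrib,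
      ← Finset.sum_add_distrib]
    refine Finset.sum_congr rfl fun j _ => ?_
    rw [huSj j]; ring
  have hSu := key u
  have hSuS' : (∑ j, (uS j - v j) ^ 2) = lam ^ 2 * dot a a := by
    rw [key uS]; simp
  have hQ0 : 0 ≤ ∑ j, (u j - uS j) ^ 2 := Finset.sum_nonneg fun j _ => sq_nonneg _
  have hQ : 0 < (∑ j, (u j - uS j) ^ 2) + (μ - μS) ^ 2 := by
    rcases not_and_or.mp (by simpa [Prod.ext_iff] using hne) with h | h
    · obtain ⟨j, hj⟩ := Function.ne_iff.mp h
      have hne' : u j - uS j ≠ 0 := sub_ne_zero.mpr hj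
      have h1 : 0 < (u j - uS j) ^ 2 := by positivity
      have h2 : (u j - uS j) ^ 2 ≤ ∑ i, (u i - uS i) ^ 2 :=
        Finset.single_le_sum (f := fun i => (u i - uS i) ^ 2)
          (fun i _ => sq_nonneg _) (Finset.mem_univ j)
      nlinarith [sq_nonneg (μ - μS)]
    · have hne' : μ - μS ≠ 0 := sub_ne_zero.mpr h
      have : 0 < (μ - μS) ^ 2 := by positivity
      linarith
  have hlams : 0 ≤ lam * (b + dot a u + μ * c) := mul_nonneg hlam0 hs
  have hiden : lam * (dot a u - dot a v - dot a a * lam) + γ / 2 * μ ^ 2 - γ / 2 * μS ^ 2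
      = γ / 2 * (μ - μS) ^ 2 + lam * (b + dot a u + μ * c) - lam * (ω₀ + M) := by
    linear_combination (μ - μS) * hγμS + lam * hω - lam * hcμS - lam * hlamd
  simp only [miCost]
  rw [hSu, hSuS', hdotS]
  clear_value lam M uS μS den ω₀
  rcases hQ0.lt_or_eq with hS2 | hS2
  · linarith [hiden, hlamω, hlams, mul_nonneg hγ.le (sq_nonneg (μ - μS))]
  · have hsq : 0 < (μ - μS) ^ 2 := by rw [← hS2] at hQ; linarith
    linarith [hiden, hlamω, hlams, mul_pos hγ hsq]
end
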